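/- arXiv:2207.06962 — 2 statements merged into one kernel-verified Lean document; each statement's English description precedes it below -/
import Mathlib

section
/- Let L be a complete lattice with commutator as above and let a, b ∈ L with a ⊔ b = ⊤ and [a,b] = ⊥. Then a is complemented in L with complement b; moreover the complement equals the annihilator a^⊥ = ⨆{c : [a,c] = ⊥}. -/
/-!
Since `a ⊔ b = ⊤`, every `x` splits as `x = [⊤, x] = [a, x] ⊔ [b, x]`. For `x = a ⊓ b` both pieces lie
below `[a, b] = ⊥`, so `a ⊓ b = ⊥`. For `x = a^⊥` the first piece vanishes, so `a^⊥ = [b, a^⊥] ≤ b`;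
conversely `b ≤ a^⊥` because `[a, b] = ⊥`.
-/

section Commutator

variable {L : Type*} [CompleteLattice L] {com : L → L → L}

def annihilator (com : L → L → L) (a : L) : L :=
  sSup {c : L | com a c = ⊥}

theorem commutator_sup_left (hdist : ∀ (s : Set L) (b : L), com (sSup s) b = ⨆ x ∈ s, com x b)
    (x y z : L) : com (x ⊔ y) z = com x z ⊔ com y z := by
  rw [← sSup_pair, hdist, iSup_pair]

theorem eq_commutator_sup_commutator_of_sup_eq_top
    (hdist : ∀ (s : Set L) (b : L), com (sSup s) b = ⨆ x ∈ s, com x b)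
    (htop : ∀ a : L, com ⊤ a = a) {a b : L} (hsup : a ⊔ b = ⊤) (x : L) :
    x = com a x ⊔ com b x := by
  rw [← commutator_sup_left hdist, hsup, htop]

theorem commutator_mono_right (hcomm : ∀ a b : L, com a b = com b a)
    (hmono : ∀ a b c : L, a ≤ b → com a c ≤ com b c) (a : L) {b c : L} (h : b ≤ c) :
    com a b ≤ com a c := by
  rw [hcomm a b, hcomm a c]
  exact hmono b c a h

theorem commutator_annihilator (hcomm : ∀ a b : L, com a b = com b a)
    (hdist : ∀ (s : Set L) (b : L), com (sSup s) b = ⨆ x ∈ s, com x b) (a : L) :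
    com a (annihilator com a) = ⊥ := by
  rw [hcomm, annihilator, hdist]
  refine le_bot_iff.mp (iSup₂_le fun c (hc : com a c = ⊥) => ?_)
  rw [hcomm, hc]

theorem disjoint_of_sup_eq_top_of_commutator_eq_bot (hcomm : ∀ a b : L, com a b = com b a)
    (hmono : ∀ a b c : L, a ≤ b → com a c ≤ com b c)
    (hdist : ∀ (s : Set L) (b : L), com (sSup s) b = ⨆ x ∈ s, com x b)
    (htop : ∀ a : L, com ⊤ a = a) {a b : L} (hsup : a ⊔ b = ⊤) (hbot : com a b = ⊥) :
    Disjoint a b := by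
  have ha : com a (a ⊓ b) = ⊥ :=
    le_bot_iff.mp ((commutator_mono_right hcomm hmono a inf_le_right).trans_eq hbot)
  have hb : com b (a ⊓ b) = ⊥ :=
    le_bot_iff.mp ((commutator_mono_right hcomm hmono b inf_le_left).trans_eq (hcomm b a ▸ hbot))
  rw [disjoint_iff, eq_commutator_sup_commutator_of_sup_eq_top hdist htop hsup (a ⊓ b), ha, hb,
    sup_bot_eq]

theorem annihilator_eq_of_sup_eq_top_of_commutator_eq_bot (hcomm : ∀ a b : L, com a b = com b a)
    (hle : ∀ a b : L, com a b ≤ a ⊓ b)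
    (hdist : ∀ (s : Set L) (b : L), com (sSup s) b = ⨆ x ∈ s, com x b)
    (htop : ∀ a : L, com ⊤ a = a) {a b : L} (hsup : a ⊔ b = ⊤) (hbot : com a b = ⊥) :
    annihilator com a = b := by
  refine le_antisymm ?_ (le_sSup hbot)
  calc annihilator com a
      = com a (annihilator com a) ⊔ com b (annihilator com a) :=
        eq_commutator_sup_commutator_of_sup_eq_top hdist htop hsup _
    _ = com b (annihilator com a) := by rw [commutator_annihilator hcomm hdist, bot_sup_eq]
    _ ≤ b := (hle _ _).trans inf_le_left

end Commutator

theorem isCompl_of_codisjoint_commutator_bot {L : Type*} [CompleteLattice L]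
    (com : L → L → L)
    (hcomm : ∀ a b : L, com a b = com b a)
    (hmono : ∀ a b c : L, a ≤ b → com a c ≤ com b c)
    (hle : ∀ a b : L, com a b ≤ a ⊓ b)
    (hdist : ∀ (s : Set L) (b : L), com (sSup s) b = ⨆ x ∈ s, com x b)
    (htop : ∀ a : L, com ⊤ a = a)
    (a b : L) (hsup : a ⊔ b = ⊤) (hbot : com a b = ⊥) :
    IsCompl a b ∧ b = sSup {c : L | com a c = ⊥} :=
  ⟨⟨disjoint_of_sup_eq_top_of_commutator_eq_bot hcomm hmono hdist htop hsup hbot,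
      codisjoint_iff.mpr hsup⟩,
    (annihilator_eq_of_sup_eq_top_of_commutator_eq_bot hcomm hle hdist htop hsup hbot).symm⟩
end

section
/- In the setting of the reticulation, for every prime element p of L we have (p^*)_* = p, where p^* = {λ(a) : a ∈ K, a ≤ p} and for an ideal I of D, I_* = ⨆{a ∈ K : λ(a) ∈ I}. Consequently the map p ↦ p^* from primes of L to prime ideals of D is injective. -/
/-- `p` is a prime element with respect to the commutator `com`. -/
def ComPrime {L : Type*} [CompleteLattice L] (com : L → L → L) (p : L) : Prop :=
  p ≠ ⊤ ∧ ∀ a b : L, com a b ≤ p → a ≤ p ∨ b ≤ p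

/-- The radical of `a`: the infimum of all primes above `a`. -/
def comRho {L : Type*} [CompleteLattice L] (com : L → L → L) (a : L) : L :=
  sInf {p | ComPrime com p ∧ a ≤ p}

/-- `C`: the closure of the set of compact elements under binary joins and commutators. -/
inductive InC {L : Type*} [CompleteLattice L] (com : L → L → L) : L → Prop
  | base (a : L) : IsCompactElement a → InC com a
  | join {a b : L} : InC com a → InC com b → InC com (a ⊔ b)
  | comm {a b : L} : InC com a → InC com b → InC com (com a b)

/-- `θ^* = {λ(a) : a compact, a ≤ θ}` as a subset of the reticulation. -/
def upStar {L : Type*} [CompleteLattice L] {D : Type*} (lam : L → D) (θ : L) : Set D :=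
  {d | ∃ a : L, IsCompactElement a ∧ a ≤ θ ∧ lam a = d}

/-- `I_* = ⨆{a compact : λ(a) ∈ I}`. -/
def downStar {L : Type*} [CompleteLattice L] {D : Type*} (lam : L → D) (I : Set D) : L :=
  sSup {a : L | IsCompactElement a ∧ lam a ∈ I}

/-! Since `λ` reflects the order of radicals, every compact `a` with `λ(a) = λ(b)` for a compact
`b ≤ θ` lies below `ρ(a) ≤ ρ(b) ≤ ρ(θ)`; so `(θ^*)_*` is squeezed between the join of the compact
elements below `θ` and `ρ(θ)`, which for a prime `θ` in a compactly generated lattice are both `θ`. -/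

section Radical

variable {L : Type*} [CompleteLattice L] (com : L → L → L)

theorem le_comRho (a : L) : a ≤ comRho com a :=
  le_sInf fun _ hp => hp.2

variable {com}

theorem comRho_mono {a b : L} (hab : a ≤ b) : comRho com a ≤ comRho com b :=
  sInf_le_sInf fun _ hp => ⟨hp.1, hab.trans hp.2⟩

theorem ComPrime.comRho_eq {p : L} (hp : ComPrime com p) : comRho com p = p :=
  le_antisymm (sInf_le ⟨hp, le_rfl⟩) (le_comRho com p)

end Radical

section Reticulation

variable {L : Type*} [CompleteLattice L] {D : Type*} (lam : L → D)

theorem sSup_compact_le_downStar_upStar (θ : L) :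
    sSup {k | IsCompactElement k ∧ k ≤ θ} ≤ downStar lam (upStar lam θ) :=
  sSup_le_sSup fun _ ⟨hk, hkθ⟩ => ⟨hk, _, hk, hkθ, rfl⟩

theorem downStar_upStar_le_comRho [Preorder D] {com : L → L → L}
    (hlam : ∀ a b : L, IsCompactElement a → IsCompactElement b →
      lam a ≤ lam b → comRho com a ≤ comRho com b) (θ : L) :
    downStar lam (upStar lam θ) ≤ comRho com θ := by
  refine sSup_le ?_
  rintro a ⟨ha, b, hb, hbθ, hba⟩
  calc a ≤ comRho com a := le_comRho com a
    _ ≤ comRho com b := hlam a b ha hb hba.ge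
    _ ≤ comRho com θ := comRho_mono hbθ

end Reticulation

theorem downStar_upStar_prime_and_injective_general {L : Type*} [CompleteLattice L]
    (com : L → L → L)
    (hcg : ∀ a : L, a = sSup {k | IsCompactElement k ∧ k ≤ a})
    {D : Type*} [DistribLattice D] (lam : L → D)
    (hlamle : ∀ a b : L, InC com a → InC com b →
      (lam a ≤ lam b ↔ comRho com a ≤ comRho com b)) :
    (∀ p : L, ComPrime com p → downStar lam (upStar lam p) = p) ∧
    (∀ p q : L, ComPrime com p → ComPrime com q → upStar lam p = upStar lam q → p = q) := by
  have hlam : ∀ a b : L, IsCompactElement a → IsCompactElement b →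
      lam a ≤ lam b → comRho com a ≤ comRho com b :=
    fun a b ha hb => (hlamle a b (.base a ha) (.base b hb)).mp
  have downStar_upStar_eq : ∀ p : L, ComPrime com p → downStar lam (upStar lam p) = p :=
    fun p hp => le_antisymm ((downStar_upStar_le_comRho lam hlam p).trans hp.comRho_eq.le)
      ((hcg p).trans_le (sSup_compact_le_downStar_upStar lam p))
  refine ⟨downStar_upStar_eq, fun p q hp hq hpq => ?_⟩
  rw [← downStar_upStar_eq p hp, ← downStar_upStar_eq q hq, hpq]

theorem downStar_upStar_prime_and_injective {L : Type*} [CompleteLattice L]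
    (com : L → L → L)
    (hcomm : ∀ a b : L, com a b = com b a)
    (hmono : ∀ a b c : L, a ≤ b → com a c ≤ com b c)
    (hle : ∀ a b : L, com a b ≤ a ⊓ b)
    (hdist : ∀ (s : Set L) (b : L), com (sSup s) b = ⨆ x ∈ s, com x b)
    (htop : ∀ a : L, com ⊤ a = a)
    (hex : ∀ a : L, a ≠ ⊤ → ∃ p, ComPrime com p ∧ a ≤ p)
    (hcg : ∀ a : L, a = sSup {k | IsCompactElement k ∧ k ≤ a})
    (htopc : IsCompactElement (⊤ : L))
    {D : Type*} [DistribLattice D] [BoundedOrder D] (lam : L → D)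
    (hlamle : ∀ a b : L, InC com a → InC com b →
      (lam a ≤ lam b ↔ comRho com a ≤ comRho com b))
    (hlamsup : ∀ a b : L, InC com a → InC com b → lam (a ⊔ b) = lam a ⊔ lam b)
    (hlaminf : ∀ a b : L, InC com a → InC com b → lam (com a b) = lam a ⊓ lam b)
    (hlambot : lam ⊥ = ⊥) (hlamtop : ∀ a : L, InC com a → (lam a = ⊤ ↔ a = ⊤))
    (hlamsurj : ∀ d : D, ∃ a : L, InC com a ∧ lam a = d) :
    (∀ p : L, ComPrime com p → downStar lam (upStar lam p) = p) ∧
    (∀ p q : L, ComPrime com p → ComPrime com q → upStar lam p = upStar lam q → p = q) :=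
  downStar_upStar_prime_and_injective_general com hcg lam hlamle
end
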